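/- Let Q be a nonzero n_T×n_T Hermitian positive semidefinite matrix, let γ be a real number such that K := Θ(Q) + γ I is Hermitian positive definite, and suppose Q K = (1/2)(Tr(Q) + 1/Tr(Q)) · λ_max(K) · Q. Then Tr(Q) = 1, λ_max(K) = Tr(Q K), and consequently Q Θ(Q) = Tr(Q Θ(Q)) · Q and λ_max(Θ(Q)) = Tr(Q Θ(Q)). -/

import Mathlib

open Matrix
open scoped ComplexOrder

/-- The largest eigenvalue of a (Hermitian) complex matrix, expressed as the
supremum of its real eigenvalues. -/
noncomputable def lamMax {n : ℕ} (A : Matrix (Fin n) (Fin n) ℂ) : ℝ :=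
  sSup {t : ℝ | ∃ v : Fin n → ℂ, v ≠ 0 ∧ A *ᵥ v = (t : ℂ) • v}

/-!
Since `K` and `Q` are Hermitian, `Q K = α Q` also gives `K Q = α Q`, so every nonzero column of `Q`
is an eigenvector of `K` for `α = ½(t + 1/t) λ_max(K)`, where `t = Tr Q > 0`. Positive definiteness
of `K` gives `0 < α ≤ λ_max(K)`, hence `½(t + 1/t) ≤ 1`, and AM–GM forces `t = 1`. The remaining
claims follow by taking traces, and because `Θ = K - γ I` has the spectrum of `K` shifted by `-γ`.
-/

namespace Matrix

variable {𝕜 : Type*} [RCLike 𝕜] {n : Type*} [Fintype n]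

theorem PosSemidef.trace_pos_of_ne_zero {A : Matrix n n 𝕜} (hA : A.PosSemidef) (h : A ≠ 0) :
    0 < A.trace :=
  hA.trace_nonneg.lt_of_ne (Ne.symm ((not_congr hA.trace_eq_zero_iff).mpr h))

variable [DecidableEq n]

theorem mem_spectrum_real_iff_exists_mulVec_eq_smul {A : Matrix n n 𝕜} {t : ℝ} :
    t ∈ spectrum ℝ A ↔ ∃ v : n → 𝕜, v ≠ 0 ∧ A *ᵥ v = (t : 𝕜) • v := by
  rw [← spectrum.algebraMap_mem_iff 𝕜, ← spectrum_toLin',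
    ← Module.End.hasEigenvalue_iff_mem_spectrum, Module.End.hasEigenvalue_iff,
    Submodule.ne_bot_iff]
  simp only [Module.End.mem_eigenspace_iff, toLin'_apply, RCLike.algebraMap_eq_ofReal]
  exact exists_congr fun v => and_comm

theorem mem_spectrum_real_of_mul_eq_smul {A B : Matrix n n 𝕜} {t : ℝ} (hB : B ≠ 0)
    (h : A * B = (t : 𝕜) • B) : t ∈ spectrum ℝ A := by
  obtain ⟨v, hv⟩ : ∃ v, B *ᵥ v ≠ 0 := by
    by_contra! hB0
    exact hB (toLin'.injective (LinearMap.ext fun v => by simpa using hB0 v))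
  exact mem_spectrum_real_iff_exists_mulVec_eq_smul.mpr
    ⟨B *ᵥ v, hv, by rw [mulVec_mulVec, h, smul_mulVec]⟩

theorem PosDef.pos_of_mem_spectrum_real {A : Matrix n n 𝕜} (hA : A.PosDef) {t : ℝ}
    (ht : t ∈ spectrum ℝ A) : 0 < t := by
  rw [hA.isHermitian.spectrum_real_eq_range_eigenvalues] at ht
  obtain ⟨i, rfl⟩ := ht
  exact hA.eigenvalues_pos i

end Matrix

theorem lamMax_eq_sSup_spectrum {n : ℕ} (A : Matrix (Fin n) (Fin n) ℂ) :
    lamMax A = sSup (spectrum ℝ A) :=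
  congrArg sSup (Set.ext fun _ => Matrix.mem_spectrum_real_iff_exists_mulVec_eq_smul.symm)

theorem le_lamMax {n : ℕ} {A : Matrix (Fin n) (Fin n) ℂ} {t : ℝ} (ht : t ∈ spectrum ℝ A) :
    t ≤ lamMax A :=
  lamMax_eq_sSup_spectrum A ▸ le_csSup finite_real_spectrum.bddAbove ht

theorem lamMax_add_smul_one {n : ℕ} [NeZero n] {A : Matrix (Fin n) (Fin n) ℂ}
    (hA : A.IsHermitian) (c : ℝ) : lamMax (A + (c : ℂ) • 1) = lamMax A + c := by
  have hne : (spectrum ℝ A).Nonempty := by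
    rw [hA.spectrum_real_eq_range_eigenvalues]
    exact Set.range_nonempty _
  rw [lamMax_eq_sSup_spectrum, lamMax_eq_sSup_spectrum, Complex.coe_smul,
    ← Algebra.algebraMap_eq_smul_one, ← spectrum.add_singleton_eq,
    csSup_add hne finite_real_spectrum.bddAbove (Set.singleton_nonempty c) bddAbove_singleton,
    csSup_singleton]

theorem eq_one_of_add_inv_le_two {t : ℝ} (ht : 0 < t) (h : t + t⁻¹ ≤ 2) : t = 1 := by
  have : t * t⁻¹ = 1 := mul_inv_cancel₀ ht.ne'
  nlinarith [sq_nonneg (t - 1)]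

theorem stmt_13_general (nT : ℕ) (Θ K : Matrix (Fin nT) (Fin nT) ℂ)
    (Q : Matrix (Fin nT) (Fin nT) ℂ) (hQ : Q.PosSemidef) (hQne : Q ≠ 0)
    (γ : ℝ) (hK : K = Θ + (γ : ℂ) • 1) (hKpd : K.PosDef)
    (heq : Q * K = ((((Q.trace.re + (Q.trace.re)⁻¹) / 2) * lamMax K : ℝ) : ℂ) • Q) :
    Q.trace = 1 ∧ lamMax K = (Q * K).trace.re ∧
    Q * Θ = (Q * Θ).trace • Q ∧ lamMax Θ = (Q * Θ).trace.re := by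
  obtain ⟨htr_re, htr_im⟩ := Complex.pos_iff.mp (hQ.trace_pos_of_ne_zero hQne)
  set t := Q.trace.re
  set L := lamMax K
  set α := (t + t⁻¹) / 2 * L with hα
  have hKQ : K * Q = (α : ℂ) • Q := by
    simpa [hKpd.isHermitian.eq, hQ.isHermitian.eq] using congrArg conjTranspose heq
  have hα_mem : α ∈ spectrum ℝ K := mem_spectrum_real_of_mul_eq_smul hQne hKQ
  have hα_pos : 0 < α := hKpd.pos_of_mem_spectrum_real hα_mem
  have hα_le : α ≤ L := le_lamMax hα_mem
  have ht : t = 1 := by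
    have hmean : (t + t⁻¹) / 2 ≤ 1 := (mul_le_iff_le_one_left (hα_pos.trans_le hα_le)).mp hα_le
    exact eq_one_of_add_inv_le_two htr_re (by linarith)
  have htrace : Q.trace = 1 := Complex.ext ht htr_im.symm
  have hQK : Q * K = (L : ℂ) • Q := by
    rw [heq, hα, ht]
    norm_num
  have hQΘ : Q * Θ = ((L - γ : ℝ) : ℂ) • Q := by
    rw [show Θ = K - (γ : ℂ) • 1 by rw [hK, add_sub_cancel_right], Matrix.mul_sub, hQK,
      Matrix.mul_smul, Matrix.mul_one, Complex.ofReal_sub, sub_smul]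
  have hΘ : Θ.IsHermitian := by
    simpa [hK] using hKpd.isHermitian.sub (isHermitian_one.smul (Complex.conj_ofReal γ))
  have : NeZero nT := ⟨by rintro rfl; exact hQne (Subsingleton.elim _ _)⟩
  have hL : L = lamMax Θ + γ := by rw [← lamMax_add_smul_one hΘ, ← hK]
  refine ⟨htrace, ?_, ?_, ?_⟩
  · simp [hQK, htrace]
  · simp [hQΘ, htrace]
  · simp [hQΘ, htrace, hL]

/-- Let `Q` be a nonzero Hermitian PSD matrix, `γ` real with
`K = Θ(Q) + γI` positive definite, and suppose
`Q K = (1/2)(Tr(Q) + 1/Tr(Q)) λ_max(K) Q`. Then `Tr(Q) = 1`,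
`λ_max(K) = Tr(Q K)`, and consequently `Q Θ(Q) = Tr(Q Θ(Q)) Q` and
`λ_max(Θ(Q)) = Tr(Q Θ(Q))`. Here `S_R = ρ H_R†H_R`, `S_E = ρ H_E†H_E` and
`Θ(Q) = S_R(I+QS_R)⁻¹ − S_E(I+QS_E)⁻¹`. -/
theorem stmt_13 (nT nR nE : ℕ) (HR : Matrix (Fin nR) (Fin nT) ℂ)
    (HE : Matrix (Fin nE) (Fin nT) ℂ) (ρ : ℝ) (hρ : 0 < ρ)
    (SR SE Θ K : Matrix (Fin nT) (Fin nT) ℂ)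
    (hSR : SR = (ρ : ℂ) • (HRᴴ * HR)) (hSE : SE = (ρ : ℂ) • (HEᴴ * HE))
    (Q : Matrix (Fin nT) (Fin nT) ℂ) (hQ : Q.PosSemidef) (hQne : Q ≠ 0)
    (hΘ : Θ = SR * (1 + Q * SR)⁻¹ - SE * (1 + Q * SE)⁻¹)
    (γ : ℝ) (hK : K = Θ + (γ : ℂ) • 1) (hKpd : K.PosDef)
    (heq : Q * K = ((((Q.trace.re + (Q.trace.re)⁻¹) / 2) * lamMax K : ℝ) : ℂ) • Q) :
    Q.trace = 1 ∧ lamMax K = (Q * K).trace.re ∧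
    Q * Θ = (Q * Θ).trace • Q ∧ lamMax Θ = (Q * Θ).trace.re :=
  stmt_13_general nT Θ K Q hQ hQne γ hK hKpd heq
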